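/- arXiv:2203.10410 — 5 statements merged into one kernel-verified Lean document; each statement's English description precedes it below -/
import Mathlib

section
/- Flattening a loop inside the body of a loop preserves language: L(⟲(⟲(M, R₁,…,Rₖ), S₁,…,Sₘ)) = L(⟲(M, R₁,…,Rₖ, S₁,…,Sₘ)). -/
/-- Process trees: τ leaf, activity leaf, and nodes for the operators
×, →, ∧ (shuffle), ↔ (interleaved), ∨ (inclusive choice) and ⟲ (loop). -/
inductive PT (σ : Type) where
  | tau  : PT σ
  | act  : σ → PT σ
  | xor  : List (PT σ) → PT σ
  | seq  : List (PT σ) → PT σ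
  | par  : List (PT σ) → PT σ
  | int  : List (PT σ) → PT σ
  | ror  : List (PT σ) → PT σ
  | loop : List (PT σ) → PT σ

variable {σ : Type}

/-- `Shuffles s t u`: `u` is an interleaving of `s` and `t`. -/
inductive Shuffles : List σ → List σ → List σ → Prop where
  | nil : Shuffles [] [] []
  | left {a : σ} {s t u} : Shuffles s t u → Shuffles (a :: s) t (a :: u)
  | right {a : σ} {s t u} : Shuffles s t u → Shuffles s (a :: t) (a :: u)

/-- Shuffle of two trace languages. -/
def shuffleL (L₁ L₂ : Language σ) : Language σ :=
  {u | ∃ s ∈ L₁, ∃ t ∈ L₂, Shuffles s t u}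

/-- Union of a list of languages. -/
def xorL (Ls : List (Language σ)) : Language σ := Ls.foldr (· + ·) 0

/-- Concatenation of a list of languages. -/
def seqL (Ls : List (Language σ)) : Language σ := Ls.foldr (· * ·) 1

/-- Shuffle of a list of languages. -/
def parL (Ls : List (Language σ)) : Language σ := Ls.foldr shuffleL 1

/-- Interleaved composition: union over all permutations of the
sequential composition. -/
def intL (Ls : List (Language σ)) : Language σ :=
  {w | ∃ p ∈ Ls.permutations, w ∈ seqL p}

/-- Inclusive choice: union over all nonempty subsets of the shuffle. -/
def orL (Ls : List (Language σ)) : Language σ :=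
  {w | ∃ s ∈ Ls.sublists, s ≠ [] ∧ w ∈ parL s}

/-- Loop: `body · (redo · body)∗`. -/
def loopL : List (Language σ) → Language σ
  | [] => 0
  | body :: redos => body * KStar.kstar (xorL redos * body)

/-- The language of a process tree. -/
def lang : PT σ → Language σ
  | .tau => 1
  | .act a => {[a]}
  | .xor Ms => xorL (Ms.attach.map fun x => lang x.1)
  | .seq Ms => seqL (Ms.attach.map fun x => lang x.1)
  | .par Ms => parL (Ms.attach.map fun x => lang x.1)
  | .int Ms => intL (Ms.attach.map fun x => lang x.1)
  | .ror Ms => orL (Ms.attach.map fun x => lang x.1)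
  | .loop Ms => loopL (Ms.attach.map fun x => lang x.1)
decreasing_by all_goals (have := List.sizeOf_lt_of_mem x.2; simp; omega)



open Computability in
lemma kstar_add_eq' {α : Type*} [KleeneAlgebra α] (a b : α) :
    (a + b)∗ = a∗ * (b * a∗)∗ := by
  apply le_antisymm
  · apply kstar_le_of_mul_le_right
    · exact le_mul_of_le_of_one_le one_le_kstar one_le_kstar
    · rw [add_mul, add_eq_sup]
      apply sup_le
      · rw [← mul_assoc]
        exact mul_le_mul_left mul_kstar_le_kstar _
      · rw [← mul_assoc]
        calc b * a∗ * (b * a∗)∗ ≤ (b * a∗)∗ := mul_kstar_le_kstar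
          _ ≤ a∗ * (b * a∗)∗ := le_mul_of_one_le_left' one_le_kstar
  · have ha : a∗ ≤ (a + b)∗ := kstar_mono (by rw [add_eq_sup]; exact le_sup_left)
    have hb : b * a∗ ≤ (a + b)∗ :=
      (mul_le_mul' (le_kstar.trans' (by rw [add_eq_sup]; exact le_sup_right)) ha).trans (kstar_mul_kstar _).le
    calc a∗ * (b * a∗)∗ ≤ (a + b)∗ * ((a + b)∗)∗ :=
          mul_le_mul' ha (kstar_mono hb)
      _ = (a + b)∗ := by rw [kstar_idem, kstar_mul_kstar]

lemma xorL_append {σ : Type} (L₁ L₂ : List (Language σ)) :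
    xorL (L₁ ++ L₂) = xorL L₁ + xorL L₂ := by
  induction L₁ with
  | nil => simp [xorL]
  | cons a l ih => simp only [xorL, List.foldr_cons, List.cons_append] at ih ⊢; rw [ih, add_assoc]

lemma lang_loop {σ : Type} (Ms : List (PT σ)) :
    lang (PT.loop Ms) = loopL (Ms.map lang) := by
  rw [lang]
  simp [List.attach_map_val]

/-- Flattening a loop inside the body of a loop preserves the language. -/
theorem assoc_loop_body {σ : Type} (M : PT σ) (Rs Ss : List (PT σ)) :
    lang (PT.loop (PT.loop (M :: Rs) :: Ss)) = lang (PT.loop (M :: (Rs ++ Ss))) := by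
  rw [lang_loop, lang_loop, List.map_cons, List.map_cons, List.map_append, lang_loop,
    List.map_cons, loopL, loopL, loopL, xorL_append, add_mul, kstar_add_eq']
  simp [mul_assoc]
end

section
/- Pulling a τ out of an exclusive choice nested under an inclusive choice preserves language: L(∨(M₁,…,Mₖ, ×(N₁,…,Nₘ, τ))) = L(×(τ, ∨(M₁,…,Mₖ, ×(N₁,…,Nₘ)))), provided m ≥ 1. -/
variable {σ : Type}

lemma shuffles_nil_self (s : List σ) : Shuffles s [] s := by
  induction s with
  | nil => exact .nil
  | cons a s ih => exact .left ih

lemma shuffles_nil_right {s t u : List σ} (hsh : Shuffles s t u) (ht : t = []) : u = s := by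
  induction hsh with
  | nil => rfl
  | left _ ih => simp [ih ht]
  | right => simp at ht

lemma shuffleL_one_right (A : Language σ) : shuffleL A 1 = A := by
  ext u
  constructor
  · rintro ⟨s, hs, t, ht, hsh⟩
    rw [Language.mem_one] at ht
    rwa [shuffles_nil_right hsh ht]
  · intro hu
    exact ⟨u, hu, [], rfl, shuffles_nil_self u⟩

lemma shuffleL_add_right (A B C : Language σ) :
    shuffleL A (B + C) = shuffleL A B + shuffleL A C := by
  ext u
  simp only [shuffleL, Set.mem_setOf_eq, Language.mem_add]
  constructor
  · rintro ⟨s, hs, t, ht | ht, hsh⟩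
    · exact Or.inl ⟨s, hs, t, ht, hsh⟩
    · exact Or.inr ⟨s, hs, t, ht, hsh⟩
  · rintro (⟨s, hs, t, ht, hsh⟩ | ⟨s, hs, t, ht, hsh⟩)
    · exact ⟨s, hs, t, Or.inl ht, hsh⟩
    · exact ⟨s, hs, t, Or.inr ht, hsh⟩

lemma foldr_shuffleL_add (l : List (Language σ)) (A B : Language σ) :
    l.foldr shuffleL (A + B) = l.foldr shuffleL A + l.foldr shuffleL B := by
  induction l with
  | nil => rfl
  | cons x l ih => simp [List.foldr_cons, ih, shuffleL_add_right]

lemma parL_concat (l : List (Language σ)) (A : Language σ) :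
    parL (l ++ [A]) = l.foldr shuffleL A := by
  simp [parL, List.foldr_append, shuffleL_one_right]

lemma parL_concat_add_one (l : List (Language σ)) (A : Language σ) :
    parL (l ++ [A + 1]) = parL (l ++ [A]) + parL l := by
  rw [parL_concat, parL_concat, foldr_shuffleL_add]
  rfl

lemma xorL_concat (l : List (Language σ)) (a : Language σ) :
    xorL (l ++ [a]) = xorL l + a := by
  induction l with
  | nil => simp [xorL]
  | cons x l ih => simp [xorL, List.foldr_cons] at ih ⊢; rw [ih, add_assoc]

lemma orL_concat_add_one (Ls : List (Language σ)) (A : Language σ) :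
    orL (Ls ++ [A + 1]) = 1 + orL (Ls ++ [A]) := by
  ext w
  simp only [orL, Set.mem_setOf_eq, List.mem_sublists, Language.mem_add]
  constructor
  · rintro ⟨s, hs, hne, hw⟩
    rcases List.sublist_append_iff.1 hs with ⟨s1, s2, rfl, hs1, hs2⟩
    rcases (List.sublist_singleton.1 hs2) with rfl | rfl
    · simp only [List.append_nil] at hne hw ⊢
      exact Or.inr ⟨s1, hs1.trans (List.sublist_append_left _ _), hne, hw⟩
    · rw [parL_concat_add_one] at hw
      rcases hw with hw | hw
      · exact Or.inr ⟨s1 ++ [A], hs1.append (List.Sublist.refl _), by simp, hw⟩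
      · rcases eq_or_ne s1 [] with rfl | hne1
        · left
          simpa [parL, Language.mem_one] using hw
        · exact Or.inr ⟨s1, hs1.trans (List.sublist_append_left _ _), hne1, hw⟩
  · rintro (hw | ⟨s, hs, hne, hw⟩)
    · refine ⟨[A + 1], ?_, by simp, ?_⟩
      · exact (List.sublist_append_right _ _)
      · replace hw : w = [] := hw
        subst hw
        simp [parL, shuffleL_one_right, Language.mem_add, Language.mem_one]
    · rcases List.sublist_append_iff.1 hs with ⟨s1, s2, rfl, hs1, hs2⟩
      rcases (List.sublist_singleton.1 hs2) with rfl | rfl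
      · simp only [List.append_nil] at hne hw ⊢
        exact ⟨s1, hs1.trans (List.sublist_append_left _ _), hne, hw⟩
      · refine ⟨s1 ++ [A + 1], hs1.append (List.Sublist.refl _), by simp, ?_⟩
        rw [parL_concat_add_one]
        exact Or.inl hw

lemma attach_map_lang (l : List (PT σ)) :
    (l.attach.map fun x => lang x.1) = l.map lang := by
  simp

lemma lang_ror (l : List (PT σ)) : lang (PT.ror l) = orL (l.map lang) := by
  rw [lang, attach_map_lang]

lemma lang_xor (l : List (PT σ)) : lang (PT.xor l) = xorL (l.map lang) := by
  rw [lang, attach_map_lang]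

/-- Pulling a τ out of an exclusive choice nested under an inclusive
choice preserves the language. -/
theorem tau_ror_xor {σ : Type} (Ms Ns : List (PT σ)) (h : Ns ≠ []) :
    lang (PT.ror (Ms ++ [PT.xor (Ns ++ [PT.tau])])) =
      lang (PT.xor [PT.tau, PT.ror (Ms ++ [PT.xor Ns])]) := by
  have htau : lang (PT.tau : PT σ) = 1 := by rw [lang]
  rw [lang_ror, lang_xor]
  simp only [List.map_append, List.map_cons, List.map_nil, lang_ror, lang_xor, htau,
    xorL_concat, orL_concat_add_one]
  simp [xorL, add_comm]
end

section
/- If every trace in each of the languages L(S₁),…,L(Sₙ) has length at most 1, then the interleaved composition equals the concurrent (shuffle) composition: L(↔(S₁,…,Sₙ)) = L(∧(S₁,…,Sₙ)). -/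
variable {σ : Type}

lemma shuffles_nil_left_eq {s t u : List σ} (h : Shuffles s t u) (hs : s = []) : u = t := by
  induction h with
  | nil => rfl
  | left _ _ => simp at hs
  | right _ ih => rw [ih hs]

lemma shuffles_self_append : ∀ (s t : List σ), Shuffles s t (s ++ t)
  | [], [] => .nil
  | [], _ :: t => .right (shuffles_self_append [] t)
  | _ :: s, t => .left (shuffles_self_append s t)

lemma shuffles_single {s t w : List σ} {a : σ} (h : Shuffles s t w) (hs : s = [a]) :
    ∃ u v, t = u ++ v ∧ w = u ++ a :: v := by
  induction h with
  | nil => simp at hs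
  | left h _ =>
    injection hs with h1 h2
    subst h1 h2
    exact ⟨[], _, rfl, by simp [shuffles_nil_left_eq h rfl]⟩
  | right _ ih =>
    obtain ⟨u, v, rfl, rfl⟩ := ih hs
    exact ⟨_ :: u, v, rfl, rfl⟩

/-- The key rearrangement lemma for shuffles. -/
lemma shuffles_exchange {s v w : List σ} (h : Shuffles s v w) :
    ∀ {t r : List σ}, Shuffles t r v →
      ∃ v', Shuffles s r v' ∧ Shuffles t v' w := by
  induction h with
  | nil =>
    intro t r htr
    cases htr
    exact ⟨[], .nil, .nil⟩
  | left _ ih =>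
    intro t r htr
    obtain ⟨v', h1, h2⟩ := ih htr
    exact ⟨_ :: v', .left h1, .right h2⟩
  | right _ ih =>
    intro t r htr
    cases htr with
    | left htr' =>
      obtain ⟨v', h1, h2⟩ := ih htr'
      exact ⟨v', h1, .left h2⟩
    | right htr' =>
      obtain ⟨v', h1, h2⟩ := ih htr'
      exact ⟨_ :: v', .right h1, .right h2⟩

lemma shuffleL_left_comm (A B C : Language σ) :
    shuffleL A (shuffleL B C) = shuffleL B (shuffleL A C) := by
  have key : ∀ A B C : Language σ, shuffleL A (shuffleL B C) ≤ shuffleL B (shuffleL A C) := by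
    intro A B C w hw
    obtain ⟨s, hs, v, ⟨t, ht, r, hr, htr⟩, hsv⟩ := hw
    obtain ⟨v', h1, h2⟩ := shuffles_exchange hsv htr
    exact ⟨t, ht, v', ⟨s, hs, r, hr, h1⟩, h2⟩
  exact le_antisymm (key A B C) (key B A C)

lemma parL_perm {p q : List (Language σ)} (h : p.Perm q) : parL p = parL q := by
  induction h with
  | nil => rfl
  | cons x _ ih => exact congrArg (shuffleL x) ih
  | swap x y l => exact shuffleL_left_comm y x (parL l)
  | trans _ _ ih1 ih2 => exact ih1.trans ih2

lemma seqL_subset_parL : ∀ p : List (Language σ), seqL p ≤ parL p := by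
  intro p
  induction p with
  | nil => exact le_rfl
  | cons L p ih =>
    intro w hw
    obtain ⟨s, hs, t, ht, rfl⟩ := hw
    exact ⟨s, hs, t, ih ht, shuffles_self_append s t⟩

lemma seqL_split : ∀ (p : List (Language σ)),
    (∀ L ∈ p, ∀ t ∈ L, t.length ≤ 1) →
    ∀ u v : List σ, u ++ v ∈ seqL p →
    ∃ p₁ p₂, p = p₁ ++ p₂ ∧ u ∈ seqL p₁ ∧ v ∈ seqL p₂ := by
  intro p
  induction p with
  | nil =>
    intro _ u v huv
    rw [show seqL ([] : List (Language σ)) = 1 from rfl, Language.mem_one,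
      List.append_eq_nil_iff] at huv
    exact ⟨[], [], rfl, by simp [seqL, huv.1, Language.mem_one],
      by simp [seqL, huv.2, Language.mem_one]⟩
  | cons L p ih =>
    intro hlen u v huv
    obtain ⟨s, hs, t, ht, hst⟩ := huv
    have hp : ∀ L ∈ p, ∀ t ∈ L, t.length ≤ 1 := fun L hL => hlen L (List.mem_cons_of_mem _ hL)
    cases u with
    | nil =>
      exact ⟨[], L :: p, rfl, by simp [seqL, Language.mem_one],
        ⟨s, hs, t, ht, hst⟩⟩
    | cons a u' =>
      have hsl : s.length ≤ 1 := hlen L List.mem_cons_self s hs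
      match s, hsl with
      | [], _ =>
        simp only [List.nil_append] at hst
        subst hst
        obtain ⟨p₁, p₂, rfl, h1, h2⟩ := ih hp (a :: u') v ht
        exact ⟨L :: p₁, p₂, rfl, ⟨[], hs, a :: u', h1, rfl⟩, h2⟩
      | [b], _ =>
        simp only [List.cons_append, List.nil_append] at hst
        injection hst with hab hst'
        subst hab
        have ht' : u' ++ v ∈ seqL p := by rw [← hst']; exact ht
        obtain ⟨p₁, p₂, rfl, h1, h2⟩ := ih hp u' v ht'
        exact ⟨L :: p₁, p₂, rfl, ⟨[b], hs, u', h1, rfl⟩, h2⟩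

lemma seqL_append (p q : List (Language σ)) : seqL (p ++ q) = seqL p * seqL q := by
  induction p with
  | nil => simp [seqL]
  | cons L p ih =>
    show L * seqL (p ++ q) = (L * seqL p) * seqL q
    rw [ih, mul_assoc]

lemma intL_eq_parL (Ls : List (Language σ))
    (h : ∀ L ∈ Ls, ∀ t ∈ L, t.length ≤ 1) : intL Ls = parL Ls := by
  apply le_antisymm
  · intro w hw
    obtain ⟨p, hp, hwp⟩ := hw
    rw [List.mem_permutations] at hp
    rw [← parL_perm hp]
    exact seqL_subset_parL p hwp
  · induction Ls with
    | nil =>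
      intro w hw
      exact ⟨[], by simp, hw⟩
    | cons L Ls ih =>
      intro w hw
      obtain ⟨s, hs, t, ht, hst⟩ := hw
      have hLs : ∀ L ∈ Ls, ∀ t ∈ L, t.length ≤ 1 :=
        fun L hL => h L (List.mem_cons_of_mem _ hL)
      obtain ⟨p, hp, htp⟩ := ih hLs ht
      rw [List.mem_permutations] at hp
      have hplen : ∀ M ∈ p, ∀ t ∈ M, t.length ≤ 1 := fun M hM => hLs M (hp.mem_iff.mp hM)
      have hsl : s.length ≤ 1 := h L List.mem_cons_self s hs
      match s, hsl with
      | [], _ =>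
        rw [shuffles_nil_left_eq hst rfl]
        exact ⟨L :: p, List.mem_permutations.mpr (hp.cons L), ⟨[], hs, t, htp, rfl⟩⟩
      | [a], _ =>
        obtain ⟨u, v, rfl, rfl⟩ := shuffles_single hst rfl
        obtain ⟨p₁, p₂, rfl, h1, h2⟩ := seqL_split p hplen u v htp
        refine ⟨p₁ ++ L :: p₂, List.mem_permutations.mpr ?_, ?_⟩
        · exact List.perm_middle.trans (hp.cons L)
        · rw [seqL_append]
          exact ⟨u, h1, a :: v, ⟨[a], hs, v, h2, rfl⟩, rfl⟩

/-- If every trace of every child has length at most 1, the interleaved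
composition equals the concurrent (shuffle) composition. -/
theorem c_int {σ : Type} (Ss : List (PT σ))
    (h : ∀ S ∈ Ss, ∀ t ∈ lang S, t.length ≤ 1) :
    lang (PT.int Ss) = lang (PT.par Ss) := by
  rw [lang, lang]
  apply intL_eq_parL
  intro L hL
  simp only [List.mem_map, List.mem_attach, true_and, Subtype.exists] at hL
  obtain ⟨S, hS, rfl⟩ := hL
  exact h S hS
end

section
/- The interleaving operator is not associative: the language of ↔(a, b, c) strictly contains the language of ↔(↔(a, b), c); in particular the trace ⟨a, c, b⟩ is in the former but not the latter. -/
variable {σ : Type}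

/-- The interleaving operator is not associative: L(↔(↔(a,b),c)) is
strictly contained in L(↔(a,b,c)); the trace ⟨a,c,b⟩ witnesses this. -/
theorem int_not_assoc {σ : Type} (a b c : σ) (hab : a ≠ b) (hac : a ≠ c)
    (hbc : b ≠ c) :
    (∀ w ∈ lang (PT.int [PT.int [PT.act a, PT.act b], PT.act c]),
        w ∈ lang (PT.int [PT.act a, PT.act b, PT.act c])) ∧
    [a, c, b] ∈ lang (PT.int [PT.act a, PT.act b, PT.act c]) ∧
    [a, c, b] ∉ lang (PT.int [PT.int [PT.act a, PT.act b], PT.act c]) := by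
  refine ⟨?_, ?_, ?_⟩
  · intro w hw
    simp only [lang] at hw
    simp [intL, seqL, List.permutations] at hw
    simp [lang, intL, seqL, List.permutations] at hw ⊢
    rcases hw with ⟨s, (⟨u, rfl, v, rfl, rfl⟩ | ⟨u, rfl, v, rfl, rfl⟩), t, rfl, rfl⟩ |
        ⟨s, rfl, t, (⟨u, rfl, v, rfl, rfl⟩ | ⟨u, rfl, v, rfl, rfl⟩), rfl⟩
    · exact Or.inl ⟨[a], rfl, [b, c], ⟨[b], rfl, [c], rfl, rfl⟩, rfl⟩
    · exact Or.inr (Or.inl ⟨[b], rfl, [a, c], ⟨[a], rfl, [c], rfl, rfl⟩, rfl⟩)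
    · exact Or.inr (Or.inr (Or.inr (Or.inr (Or.inl
        ⟨[c], rfl, [a, b], ⟨[a], rfl, [b], rfl, rfl⟩, rfl⟩))))
    · exact Or.inr (Or.inr (Or.inl ⟨[c], rfl, [b, a], ⟨[b], rfl, [a], rfl, rfl⟩, rfl⟩))
  · simp [lang, intL, seqL, List.permutations]
    exact Or.inr (Or.inr (Or.inr (Or.inr (Or.inr
      ⟨[a], rfl, [c, b], ⟨[c], rfl, [b], rfl, rfl⟩, rfl⟩))))
  · simp only [lang]
    simp [intL, seqL, List.permutations]
    simp [lang, intL, seqL, List.permutations]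
    rintro (⟨s, (⟨u, rfl, v, rfl, rfl⟩ | ⟨u, rfl, v, rfl, rfl⟩), t, rfl, heq⟩ |
            ⟨s, rfl, t, (⟨u, rfl, v, rfl, rfl⟩ | ⟨u, rfl, v, rfl, rfl⟩), heq⟩) <;>
      simp_all
end

section
/- The recursive structural predicate 'canEmpty' on process trees correctly decides membership of the empty trace: canEmpty(M) = true if and only if ε ∈ L(M), where canEmpty(τ)=true, canEmpty(a)=false, canEmpty(×(M₁,…,Mₙ)) = ⋁ᵢ canEmpty(Mᵢ), canEmpty(→)=canEmpty(↔)=canEmpty(∧) = ⋀ᵢ canEmpty(Mᵢ), canEmpty(∨(M₁,…,Mₙ)) = ⋁ᵢ canEmpty(Mᵢ), and canEmpty(⟲(M₁,…,Mₙ)) = canEmpty(M₁). -/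
variable {σ : Type}

/-- Structural predicate deciding whether the empty trace is expressible. -/
def canEmpty {σ : Type} : PT σ → Bool
  | .tau => true
  | .act _ => false
  | .xor Ms => Ms.attach.any fun x => canEmpty x.1
  | .seq Ms => Ms.attach.all fun x => canEmpty x.1
  | .par Ms => Ms.attach.all fun x => canEmpty x.1
  | .int Ms => Ms.attach.all fun x => canEmpty x.1
  | .ror Ms => Ms.attach.any fun x => canEmpty x.1
  | .loop [] => false
  | .loop (M :: _) => canEmpty M
decreasing_by
  all_goals first
    | (have := List.sizeOf_lt_of_mem x.2; simp; omega)
    | (simp; omega)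


lemma shuffles_nil {s t : List σ} (h : Shuffles s t []) : s = [] ∧ t = [] := by
  cases h; exact ⟨rfl, rfl⟩

lemma nil_mem_xorL {Ls : List (Language σ)} :
    [] ∈ xorL Ls ↔ ∃ L ∈ Ls, ([] : List σ) ∈ L := by
  induction Ls with
  | nil => simp [xorL]
  | cons L Ls ih =>
    simp only [xorL, List.foldr_cons, Language.mem_add, List.mem_cons]
    constructor
    · rintro (h | h)
      · exact ⟨L, Or.inl rfl, h⟩
      · obtain ⟨L', hL', h⟩ := ih.mp h
        exact ⟨L', Or.inr hL', h⟩
    · rintro ⟨L', (rfl | hL'), h⟩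
      · exact Or.inl h
      · exact Or.inr (ih.mpr ⟨L', hL', h⟩)

lemma nil_mem_seqL {Ls : List (Language σ)} :
    [] ∈ seqL Ls ↔ ∀ L ∈ Ls, ([] : List σ) ∈ L := by
  induction Ls with
  | nil => simp [seqL, Language.mem_one]
  | cons L Ls ih =>
    simp only [seqL, List.foldr_cons, Language.mem_mul, List.mem_cons]
    constructor
    · rintro ⟨a, ha, b, hb, hab⟩
      obtain ⟨rfl, rfl⟩ := List.append_eq_nil_iff.mp hab
      rintro L' (rfl | hL')
      · exact ha
      · exact (ih.mp hb) L' hL'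
    · intro h
      exact ⟨[], h L (Or.inl rfl), [], ih.mpr (fun L' hL' => h L' (Or.inr hL')), rfl⟩

lemma nil_mem_parL {Ls : List (Language σ)} :
    [] ∈ parL Ls ↔ ∀ L ∈ Ls, ([] : List σ) ∈ L := by
  induction Ls with
  | nil => simp [parL, Language.mem_one]
  | cons L Ls ih =>
    simp only [parL, List.foldr_cons, List.mem_cons]
    constructor
    · rintro ⟨s, hs, t, ht, hst⟩
      obtain ⟨rfl, rfl⟩ := shuffles_nil hst
      rintro L' (rfl | hL')
      · exact hs
      · exact (ih.mp ht) L' hL'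
    · intro h
      exact ⟨[], h L (Or.inl rfl), [],
        ih.mpr (fun L' hL' => h L' (Or.inr hL')), Shuffles.nil⟩

lemma nil_mem_intL {Ls : List (Language σ)} :
    [] ∈ intL Ls ↔ ∀ L ∈ Ls, ([] : List σ) ∈ L := by
  constructor
  · rintro ⟨p, hp, hmem⟩
    intro L hL
    exact nil_mem_seqL.mp hmem L
      (((List.mem_permutations.mp hp)).mem_iff.mpr hL)
  · intro h
    exact ⟨Ls, List.mem_permutations.mpr (List.Perm.refl _), nil_mem_seqL.mpr h⟩

lemma nil_mem_orL {Ls : List (Language σ)} :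
    [] ∈ orL Ls ↔ ∃ L ∈ Ls, ([] : List σ) ∈ L := by
  constructor
  · rintro ⟨s, hs, hne, hmem⟩
    obtain ⟨L, hL⟩ := List.exists_mem_of_ne_nil s hne
    exact ⟨L, (List.mem_sublists.mp hs).subset hL, nil_mem_parL.mp hmem L hL⟩
  · rintro ⟨L, hL, h⟩
    refine ⟨[L], List.mem_sublists.mpr (List.singleton_sublist.mpr hL),
      by simp, nil_mem_parL.mpr ?_⟩
    rintro L' hL'
    simp at hL'; subst hL'; exact h

/-- `canEmpty` correctly decides membership of the empty trace. -/
theorem canEmpty_correct {σ : Type} (M : PT σ) :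
    canEmpty M = true ↔ [] ∈ lang M := by
  match M with
  | .tau => simp [canEmpty, lang, Language.mem_one]
  | .act a =>
    simp only [canEmpty, lang]
    constructor
    · simp
    · intro h
      replace h : ([] : List σ) = [a] := h
      exact absurd h (List.cons_ne_nil a []).symm
  | .xor Ms =>
    simp only [canEmpty, lang]
    rw [nil_mem_xorL]
    simp only [List.any_eq_true, List.mem_map, List.mem_attach, true_and]
    constructor
    · rintro ⟨⟨N, hN⟩, h⟩
      exact ⟨lang N, ⟨⟨N, hN⟩, rfl⟩, (canEmpty_correct N).mp h⟩
    · rintro ⟨L, ⟨⟨N, hN⟩, rfl⟩, h⟩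
      exact ⟨⟨N, hN⟩, (canEmpty_correct N).mpr h⟩
  | .seq Ms =>
    simp only [canEmpty, lang]
    rw [nil_mem_seqL]
    simp only [List.all_eq_true, List.mem_attach, true_implies, List.mem_map,
      true_and]
    constructor
    · rintro h L ⟨⟨N, hN⟩, rfl⟩
      exact (canEmpty_correct N).mp (h ⟨N, hN⟩)
    · rintro h ⟨N, hN⟩
      exact (canEmpty_correct N).mpr (h _ ⟨⟨N, hN⟩, rfl⟩)
  | .par Ms =>
    simp only [canEmpty, lang]
    rw [nil_mem_parL]
    simp only [List.all_eq_true, List.mem_attach, true_implies, List.mem_map,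
      true_and]
    constructor
    · rintro h L ⟨⟨N, hN⟩, rfl⟩
      exact (canEmpty_correct N).mp (h ⟨N, hN⟩)
    · rintro h ⟨N, hN⟩
      exact (canEmpty_correct N).mpr (h _ ⟨⟨N, hN⟩, rfl⟩)
  | .int Ms =>
    simp only [canEmpty, lang]
    rw [nil_mem_intL]
    simp only [List.all_eq_true, List.mem_attach, true_implies, List.mem_map,
      true_and]
    constructor
    · rintro h L ⟨⟨N, hN⟩, rfl⟩
      exact (canEmpty_correct N).mp (h ⟨N, hN⟩)
    · rintro h ⟨N, hN⟩
      exact (canEmpty_correct N).mpr (h _ ⟨⟨N, hN⟩, rfl⟩)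
  | .ror Ms =>
    simp only [canEmpty, lang]
    rw [nil_mem_orL]
    simp only [List.any_eq_true, List.mem_map, List.mem_attach, true_and]
    constructor
    · rintro ⟨⟨N, hN⟩, h⟩
      exact ⟨lang N, ⟨⟨N, hN⟩, rfl⟩, (canEmpty_correct N).mp h⟩
    · rintro ⟨L, ⟨⟨N, hN⟩, rfl⟩, h⟩
      exact ⟨⟨N, hN⟩, (canEmpty_correct N).mpr h⟩
  | .loop [] =>
    simp only [canEmpty, lang]
    simp [loopL]
  | .loop (N :: Ms) =>
    simp only [canEmpty, lang]
    rw [show ((N :: Ms).attach.map fun x => lang x.1)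
        = lang N :: (Ms.attach.map fun x => lang x.1) from by
      simp [List.attach, List.attachWith, List.map_pmap]]
    rw [show loopL (lang N :: (Ms.attach.map fun x => lang x.1))
        = lang N * KStar.kstar (xorL (Ms.attach.map fun x => lang x.1) * lang N)
      from rfl]
    rw [canEmpty_correct N]
    constructor
    · intro h
      exact ⟨[], h, [], Language.nil_mem_kstar _, rfl⟩
    · rintro ⟨a, ha, b, hb, hab⟩
      obtain ⟨rfl, rfl⟩ := List.append_eq_nil_iff.mp hab
      exact ha
termination_by sizeOf M
decreasing_by
  all_goals first
    | (have := List.sizeOf_lt_of_mem hN; simp; omega)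
    | (simp; omega)
end
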